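/- Let n ≥ 2 and let B be an invertible n×n real matrix with rows b_1, …, b_n. Define the orthogonality defect od(B) = 1 − det(B·Bᵗ)/∏_{i=1}^n ‖b_i‖². Then od(B) ≤ 1 − (1/e) · (n/(S(B)+1))^{n−1}. -/

import Mathlib

/-!
Put `p i = ‖b_i‖²`, `q i = ‖b_i*‖²` and fix an index `k`. Since `⟪b_i, b_i*⟫ = 1`,
Cauchy–Schwarz gives `p i * q i ≥ 1`. Replacing the row `b_k*` of `B*` by `b_k` yields a
matrix of determinant `p k / det B` (Cramer's rule), so Hadamard's inequality for it reads
`p k ≤ det(B)² ∏_{i ≠ k} q i`, i.e. `det(B Bᵀ) / ∏ p i ≥ 1 / ∏_{i ≠ k} p i q i`.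
By AM–GM the last product is at most `(S / (n-1))^(n-1)`, and `(1 + 1/(n-1))^(n-1) ≤ e`
turns this into `e ((S+1)/n)^(n-1)`.
-/

open Matrix

/-- The Seysen measure `S(B) = ∑ i, ‖b_i‖² ‖b_i*‖²` of a basis given by the rows
of `B`, where the dual basis `B* = (B⁻¹)ᵗ` has rows `b_i* = (B⁻¹ · i)`. -/
noncomputable def seysen {n : ℕ} (B : Matrix (Fin n) (Fin n) ℝ) : ℝ :=
  ∑ i, (∑ j, (B i j) ^ 2) * (∑ j, (B⁻¹ j i) ^ 2)

open Finset Real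

theorem Finset.prod_le_sum_div_card_pow {ι : Type*} (s : Finset ι) (x : ι → ℝ)
    (hx : ∀ i ∈ s, 0 ≤ x i) : ∏ i ∈ s, x i ≤ ((∑ i ∈ s, x i) / #s) ^ #s := by
  rcases s.eq_empty_or_nonempty with rfl | hs
  · simp
  have hcard : (0 : ℝ) < #s := by exact_mod_cast hs.card_pos
  have h := geom_mean_le_arith_mean s (fun _ => 1) x (fun _ _ => zero_le_one)
    (by simpa using hcard) hx
  simp only [rpow_one, sum_const, nsmul_eq_mul, mul_one, one_mul] at h
  rwa [rpow_inv_le_iff_of_pos (prod_nonneg hx) (div_nonneg (sum_nonneg hx) hcard.le) hcard,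
    rpow_natCast] at h

theorem div_pow_le_exp_one_mul_div_succ_pow {x : ℝ} (hx : 0 ≤ x) (m : ℕ) :
    (x / m) ^ m ≤ exp 1 * (x / (m + 1)) ^ m := by
  rcases eq_or_ne m 0 with rfl | hm
  · simp [one_le_exp zero_le_one]
  have hsplit : x / m = x / (m + 1) * (1 + (m : ℝ)⁻¹) := by field_simp
  rw [hsplit, mul_pow, mul_comm]
  gcongr
  exact one_add_inv_pow_le_exp

namespace Matrix

theorem det_sq_le_prod_sum_sq {n : ℕ} (M : Matrix (Fin n) (Fin n) ℝ) :
    M.det ^ 2 ≤ ∏ i, ∑ j, M i j ^ 2 := by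
  have : Fact (Module.finrank ℝ (EuclideanSpace ℝ (Fin n)) = n) := ⟨finrank_euclideanSpace_fin⟩
  let b := EuclideanSpace.basisFun (Fin n) ℝ
  let v : Fin n → EuclideanSpace ℝ (Fin n) := fun i => WithLp.toLp 2 (M i)
  have hdet : b.toBasis.det v = M.det := by
    rw [Module.Basis.det_apply, ← det_transpose]
    rfl
  have hHadamard : |M.det| ≤ ∏ i, ‖v i‖ := by
    rw [← hdet, ← b.toBasis.orientation.volumeForm_robust' b]
    exact b.toBasis.orientation.abs_volumeForm_apply_le v
  calc M.det ^ 2 = |M.det| ^ 2 := (sq_abs _).symm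
    _ ≤ (∏ i, ‖v i‖) ^ 2 := by gcongr
    _ = ∏ i, ∑ j, M i j ^ 2 := by
      rw [← prod_pow]
      simp [v, EuclideanSpace.real_norm_sq_eq]

section Fintype

variable {ι : Type*} [Fintype ι] [DecidableEq ι] {B : Matrix ι ι ℝ}

theorem one_le_sum_sq_mul_sum_sq_nonsing_inv (hB : IsUnit B.det) (i : ι) :
    1 ≤ (∑ j, B i j ^ 2) * ∑ j, B⁻¹ j i ^ 2 := by
  have hdual : ∑ j, B i j * B⁻¹ j i = 1 := by
    simpa [mul_apply] using congr_fun₂ (mul_nonsing_inv B hB) i i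
  simpa [hdual] using sum_mul_sq_le_sq_mul_sq univ (B i) (fun j => B⁻¹ j i)

theorem sum_sq_row_pos (hB : IsUnit B.det) (i : ι) : 0 < ∑ j, B i j ^ 2 := by
  have hpq := one_le_sum_sq_mul_sum_sq_nonsing_inv hB i
  have hp : 0 ≤ ∑ j, B i j ^ 2 := sum_nonneg fun j _ => sq_nonneg _
  have hq : 0 ≤ ∑ j, B⁻¹ j i ^ 2 := sum_nonneg fun j _ => sq_nonneg _
  nlinarith

theorem det_updateRow_transpose_nonsing_inv (hB : IsUnit B.det) (k : ι) (v : ι → ℝ) :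
    ((B⁻¹)ᵀ.updateRow k v).det = B.det⁻¹ * (B *ᵥ v) k := by
  have hB' : IsUnit B⁻¹.det := isUnit_nonsing_inv_det B hB
  rw [← cramer_transpose_apply, transpose_transpose,
    ← det_smul_inv_mulVec_eq_cramer _ _ hB', nonsing_inv_nonsing_inv B hB, det_nonsing_inv,
    Ring.inverse_eq_inv']
  rfl

end Fintype

variable {n : ℕ} {B : Matrix (Fin n) (Fin n) ℝ}

theorem sum_sq_row_le_det_sq_mul_prod_erase (hB : IsUnit B.det) (k : Fin n) :
    ∑ j, B k j ^ 2 ≤ B.det ^ 2 * ∏ i ∈ univ.erase k, ∑ j, B⁻¹ j i ^ 2 := by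
  set p := ∑ j, B k j ^ 2
  set Q := ∏ i ∈ univ.erase k, ∑ j, B⁻¹ j i ^ 2
  have hHadamard := det_sq_le_prod_sum_sq ((B⁻¹)ᵀ.updateRow k (B k))
  have hdet : ((B⁻¹)ᵀ.updateRow k (B k)).det = B.det⁻¹ * p := by
    simp [det_updateRow_transpose_nonsing_inv hB, mulVec, dotProduct, p, sq]
  have hrows : ∏ i, ∑ j, ((B⁻¹)ᵀ.updateRow k (B k)) i j ^ 2 = p * Q := by
    rw [← mul_prod_erase univ _ (mem_univ k), updateRow_self]
    refine congrArg (p * ·) (prod_congr rfl fun i hi => ?_)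
    simp [updateRow_ne (ne_of_mem_erase hi)]
  rw [hdet, hrows] at hHadamard
  have hp := sum_sq_row_pos hB k
  refine le_of_mul_le_mul_left ?_ hp
  calc p * p = B.det ^ 2 * (B.det⁻¹ * p) ^ 2 := by field_simp [hB.ne_zero]
    _ ≤ B.det ^ 2 * (p * Q) := by gcongr
    _ = p * (B.det ^ 2 * Q) := by ring

theorem inv_prod_erase_le_det_mul_transpose_div (hB : IsUnit B.det) (k : Fin n) :
    (∏ i ∈ univ.erase k, (∑ j, B i j ^ 2) * ∑ j, B⁻¹ j i ^ 2)⁻¹ ≤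
      (B * Bᵀ).det / ∏ i, ∑ j, B i j ^ 2 := by
  have hG : 0 < ∏ i ∈ univ.erase k, (∑ j, B i j ^ 2) * ∑ j, B⁻¹ j i ^ 2 :=
    prod_pos fun i _ => one_pos.trans_le (one_le_sum_sq_mul_sum_sq_nonsing_inv hB i)
  rw [det_mul, det_transpose, ← sq, le_div_iff₀ (prod_pos fun i _ => sum_sq_row_pos hB i),
    inv_mul_le_iff₀ hG, prod_mul_distrib, ← mul_prod_erase univ _ (mem_univ k)]
  calc (∑ j, B k j ^ 2) * ∏ i ∈ univ.erase k, ∑ j, B i j ^ 2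
      ≤ (B.det ^ 2 * ∏ i ∈ univ.erase k, ∑ j, B⁻¹ j i ^ 2) *
          ∏ i ∈ univ.erase k, ∑ j, B i j ^ 2 := by
        gcongr
        exact sum_sq_row_le_det_sq_mul_prod_erase hB k
    _ = _ := by ring

theorem prod_erase_le_exp_one_mul_seysen (hB : IsUnit B.det) (k : Fin n) :
    ∏ i ∈ univ.erase k, (∑ j, B i j ^ 2) * ∑ j, B⁻¹ j i ^ 2 ≤
      exp 1 * ((seysen B + 1) / n) ^ (n - 1) := by
  set x : Fin n → ℝ := fun i => (∑ j, B i j ^ 2) * ∑ j, B⁻¹ j i ^ 2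
  have hx : ∀ i, 0 ≤ x i := fun i =>
    zero_le_one.trans (one_le_sum_sq_mul_sum_sq_nonsing_inv hB i)
  have hS : seysen B = ∑ i, x i := rfl
  have hS0 : 0 ≤ seysen B := hS ▸ sum_nonneg fun i _ => hx i
  have hsum : ∑ i ∈ univ.erase k, x i ≤ seysen B + 1 := by
    linarith [sum_le_univ_sum_of_nonneg (s := univ.erase k) hx]
  have hcard : #(univ.erase k) = n - 1 := by simp
  have hcast : ((n - 1 : ℕ) : ℝ) + 1 = n := by
    have := k.pos
    norm_cast
    omega
  calc ∏ i ∈ univ.erase k, x i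
      ≤ ((∑ i ∈ univ.erase k, x i) / #(univ.erase k)) ^ #(univ.erase k) :=
        prod_le_sum_div_card_pow _ x fun i _ => hx i
    _ ≤ ((seysen B + 1) / (n - 1 : ℕ)) ^ (n - 1) := by rw [hcard]; gcongr
    _ ≤ exp 1 * ((seysen B + 1) / n) ^ (n - 1) := by
        rw [← hcast]
        exact div_pow_le_exp_one_mul_div_succ_pow (by linarith) _

end Matrix

/-- The orthogonality defect `od(B) = 1 − det(B·Bᵗ)/∏ i ‖b_i‖²` of an
invertible `B` (`n ≥ 2`) satisfies `od(B) ≤ 1 − (1/e)(n/(S(B)+1))^(n−1)`. -/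
theorem stmt_14 (n : ℕ) (hn : 2 ≤ n) (B : Matrix (Fin n) (Fin n) ℝ)
    (hB : IsUnit B.det) :
    1 - (B * Bᵀ).det / ∏ i, (∑ j, (B i j) ^ 2) ≤
      1 - (1 / Real.exp 1) * ((n : ℝ) / (seysen B + 1)) ^ (n - 1) := by
  let k : Fin n := ⟨0, by omega⟩
  have hG : 0 < ∏ i ∈ univ.erase k, (∑ j, B i j ^ 2) * ∑ j, B⁻¹ j i ^ 2 :=
    prod_pos fun i _ => one_pos.trans_le (one_le_sum_sq_mul_sum_sq_nonsing_inv hB i)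
  calc 1 - (B * Bᵀ).det / ∏ i, ∑ j, B i j ^ 2
      ≤ 1 - (∏ i ∈ univ.erase k, (∑ j, B i j ^ 2) * ∑ j, B⁻¹ j i ^ 2)⁻¹ := by
        gcongr
        exact inv_prod_erase_le_det_mul_transpose_div hB k
    _ ≤ 1 - (1 / exp 1) * (n / (seysen B + 1)) ^ (n - 1) := by
        gcongr
        rw [one_div, ← inv_div, inv_pow, ← mul_inv]
        exact inv_anti₀ hG (prod_erase_le_exp_one_mul_seysen hB k)
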